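/- arXiv:2008.00589 — 2 statements merged into one kernel-verified Lean document; each statement's English description precedes it below -/
import Mathlib

section
/- Let A, B, C be affinely independent points in the Euclidean plane, and let P₁ ∈ segment ℝ B C, P₂ ∈ segment ℝ C A, P₃ ∈ segment ℝ A B. Then dist P₁ P₂ + dist P₁ P₃ ≥ min(infDist A (affineSpan ℝ {B,C}), infDist B (affineSpan ℝ {C,A}), infDist C (affineSpan ℝ {A,B})); that is, a path that enters a triangular face on one side at P₁, having come from a point P₂ of a second side, and exits through the third side at P₃ travels a distance at least the minimum distance from a vertex of the triangle to the line through the opposite side. -/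
open Metric

private lemma aux_dist_ge (W : AffineSubspace ℝ (EuclideanSpace ℝ (Fin 2)))
    (b c p q : EuclideanSpace ℝ (Fin 2))
    (hc : c ∈ W) (hq : q ∈ W) (a : ℝ) (ha : 0 ≤ a)
    (hp : p = a • b + (1 - a) • c) :
    a * infDist b (W : Set (EuclideanSpace ℝ (Fin 2))) ≤ dist p q := by
  rcases eq_or_lt_of_le ha with h | h
  · simp [← h, dist_nonneg]
  · set w : EuclideanSpace ℝ (Fin 2) := a⁻¹ • (q - c) + c with hw_def
    have hw : w ∈ W := W.smul_vsub_vadd_mem a⁻¹ hq hc hc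
    have hpq : dist p q = a * dist b w := by
      rw [dist_eq_norm, dist_eq_norm]
      have hsub : p - q = a • (b - w) := by
        rw [hp, hw_def]
        rw [smul_sub, smul_add, smul_smul, mul_inv_cancel₀ h.ne', one_smul]
        module
      rw [hsub, norm_smul, Real.norm_eq_abs, abs_of_pos h]
    rw [hpq]
    exact mul_le_mul_of_nonneg_left (infDist_le_dist_of_mem hw) h.le

theorem triangle_three_edge_visit
    (A B C : EuclideanSpace ℝ (Fin 2))
    (hABC : AffineIndependent ℝ ![A, B, C])
    (P₁ P₂ P₃ : EuclideanSpace ℝ (Fin 2))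
    (hP₁ : P₁ ∈ segment ℝ B C)
    (hP₂ : P₂ ∈ segment ℝ C A)
    (hP₃ : P₃ ∈ segment ℝ A B) :
    dist P₁ P₂ + dist P₁ P₃ ≥
      min (min (infDist A (affineSpan ℝ {B, C} : Set (EuclideanSpace ℝ (Fin 2))))
               (infDist B (affineSpan ℝ {C, A} : Set (EuclideanSpace ℝ (Fin 2)))))
          (infDist C (affineSpan ℝ {A, B} : Set (EuclideanSpace ℝ (Fin 2)))) := by
  obtain ⟨a, b, ha, hb, hab, hP⟩ := hP₁
  have hCmem : C ∈ affineSpan ℝ ({C, A} : Set (EuclideanSpace ℝ (Fin 2))) :=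
    subset_affineSpan ℝ _ (by simp)
  have hAmem : A ∈ affineSpan ℝ ({C, A} : Set (EuclideanSpace ℝ (Fin 2))) :=
    subset_affineSpan ℝ _ (by simp)
  have hBmem : B ∈ affineSpan ℝ ({A, B} : Set (EuclideanSpace ℝ (Fin 2))) :=
    subset_affineSpan ℝ _ (by simp)
  have hAmem' : A ∈ affineSpan ℝ ({A, B} : Set (EuclideanSpace ℝ (Fin 2))) :=
    subset_affineSpan ℝ _ (by simp)
  have hP₂' : P₂ ∈ affineSpan ℝ ({C, A} : Set (EuclideanSpace ℝ (Fin 2))) :=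
    ((affineSpan ℝ ({C, A} : Set (EuclideanSpace ℝ (Fin 2)))).convex).segment_subset
      hCmem hAmem hP₂
  have hP₃' : P₃ ∈ affineSpan ℝ ({A, B} : Set (EuclideanSpace ℝ (Fin 2))) :=
    ((affineSpan ℝ ({A, B} : Set (EuclideanSpace ℝ (Fin 2)))).convex).segment_subset
      hAmem' hBmem hP₃
  have h1 : a * infDist B (affineSpan ℝ ({C, A} : Set (EuclideanSpace ℝ (Fin 2)))) ≤
      dist P₁ P₂ := by
    refine aux_dist_ge _ B C P₁ P₂ hCmem hP₂' a ha ?_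
    rw [← hP]; congr 1; rw [show (1 : ℝ) - a = b by linarith]
  have h2 : b * infDist C (affineSpan ℝ ({A, B} : Set (EuclideanSpace ℝ (Fin 2)))) ≤
      dist P₁ P₃ := by
    refine aux_dist_ge _ C B P₁ P₃ hBmem hP₃' b hb ?_
    rw [← hP, show (1 : ℝ) - b = a by linarith]; module
  set dA := infDist A (affineSpan ℝ ({B, C} : Set (EuclideanSpace ℝ (Fin 2))))
  set dB := infDist B (affineSpan ℝ ({C, A} : Set (EuclideanSpace ℝ (Fin 2))))
  set dC := infDist C (affineSpan ℝ ({A, B} : Set (EuclideanSpace ℝ (Fin 2))))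
  have hm1 : min (min dA dB) dC ≤ dB := le_trans (min_le_left _ _) (min_le_right _ _)
  have hm2 : min (min dA dB) dC ≤ dC := min_le_right _ _
  have k1 := mul_le_mul_of_nonneg_left hm1 ha
  have k2 := mul_le_mul_of_nonneg_left hm2 hb
  have k3 : a * min (min dA dB) dC + b * min (min dA dB) dC = min (min dA dB) dC := by
    rw [← add_mul, hab, one_mul]
  linarith
end

section
/- Let A, B, C, D be points of the Euclidean plane such that the segments S₁ = segment ℝ A B and S₂ = segment ℝ C D are disjoint. Then the infimum of dist p q over p ∈ S₁ and q ∈ S₂ equals the minimum of the four endpoint-to-segment distances: min(min(infDist A S₂, infDist B S₂), min(infDist C S₁, infDist D S₁)); in particular the shortest distance between the two segments is attained at an endpoint of at least one of them. -/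
open Metric
open scoped RealInnerProductSpace

private lemma seg_compact (x y : EuclideanSpace ℝ (Fin 2)) : IsCompact (segment ℝ x y) := by
  rw [segment_eq_image' ℝ x y]
  exact isCompact_Icc.image (by fun_prop)

private lemma mem_seg (X Y : EuclideanSpace ℝ (Fin 2)) (θ : ℝ) (h0 : 0 ≤ θ) (h1 : θ ≤ 1) :
    X + θ • (Y - X) ∈ segment ℝ X Y := by
  rw [segment_eq_image' ℝ X Y]
  exact ⟨θ, ⟨h0, h1⟩, rfl⟩

private lemma foc (p q v : EuclideanSpace ℝ (Fin 2)) (δ : ℝ) (hδ : 0 < δ)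
    (h : ∀ t : ℝ, |t| ≤ δ → dist p q ≤ dist (p + t • v) q) : ⟪p - q, v⟫ = 0 := by
  set I := ⟪p - q, v⟫ with hI
  have key : ∀ t : ℝ, |t| ≤ δ → 0 ≤ 2 * t * I + t ^ 2 * ‖v‖ ^ 2 := by
    intro t ht
    have h1 := h t ht
    rw [dist_eq_norm, dist_eq_norm] at h1
    have h3 : ‖p - q‖ ^ 2 ≤ ‖p + t • v - q‖ ^ 2 :=
      pow_le_pow_left₀ (norm_nonneg _) h1 2
    have h4 : p + t • v - q = (p - q) + t • v := by abel
    rw [h4, norm_add_sq_real, real_inner_smul_right, norm_smul, Real.norm_eq_abs,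
      mul_pow, sq_abs] at h3
    nlinarith [h3]
  have hpos : (0:ℝ) < ‖v‖ ^ 2 + 1 := by positivity
  rcases lt_trichotomy I 0 with hI0 | hI0 | hI0
  · exfalso
    set t := min δ (-I / (‖v‖ ^ 2 + 1)) with htd
    have ht0 : 0 < t := lt_min hδ (div_pos (by linarith) hpos)
    have hk := key t (by rw [abs_of_pos ht0]; exact min_le_left _ _)
    have htle : t * (‖v‖ ^ 2 + 1) ≤ -I := by
      have h5 := min_le_right δ (-I / (‖v‖ ^ 2 + 1))
      calc t * (‖v‖ ^ 2 + 1) ≤ (-I / (‖v‖ ^ 2 + 1)) * (‖v‖ ^ 2 + 1) :=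
            mul_le_mul_of_nonneg_right h5 (le_of_lt hpos)
        _ = -I := by field_simp <;> ring
    nlinarith [sq_nonneg t, ht0, htle, hk]
  · exact hI0
  · exfalso
    set m := min δ (I / (‖v‖ ^ 2 + 1)) with hmd
    have hm0 : 0 < m := lt_min hδ (div_pos hI0 hpos)
    have hk := key (-m) (by rw [abs_neg, abs_of_pos hm0]; exact min_le_left _ _)
    have hmle : m * (‖v‖ ^ 2 + 1) ≤ I := by
      have h5 := min_le_right δ (I / (‖v‖ ^ 2 + 1))
      calc m * (‖v‖ ^ 2 + 1) ≤ (I / (‖v‖ ^ 2 + 1)) * (‖v‖ ^ 2 + 1) :=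
            mul_le_mul_of_nonneg_right h5 (le_of_lt hpos)
        _ = I := by field_simp <;> ring
    nlinarith [hm0, hmle, hk]

private lemma dep (n v w : EuclideanSpace ℝ (Fin 2)) (hn : n ≠ 0) (hv : v ≠ 0)
    (h1 : ⟪n, v⟫ = 0) (h2 : ⟪n, w⟫ = 0) : ∃ r : ℝ, w = r • v := by
  have hinner : ∀ a b : EuclideanSpace ℝ (Fin 2), ⟪a, b⟫ = a 0 * b 0 + a 1 * b 1 := by
    intro a b; simp [PiLp.inner_apply, Fin.sum_univ_two]; ring
  rw [hinner] at h1 h2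
  have hn' : n 0 ≠ 0 ∨ n 1 ≠ 0 := by
    by_contra hc
    push_neg at hc
    exact hn (by ext i; fin_cases i <;> simp [hc.1, hc.2])
  have hdet : v 0 * w 1 - v 1 * w 0 = 0 := by
    rcases hn' with h | h
    · have hz : n 0 * (v 0 * w 1 - v 1 * w 0) = 0 := by linear_combination w 1 * h1 - v 1 * h2
      rcases mul_eq_zero.mp hz with h' | h'
      · exact absurd h' h
      · exact h'
    · have hz : n 1 * (v 0 * w 1 - v 1 * w 0) = 0 := by
        linear_combination (- w 0) * h1 + v 0 * h2
      rcases mul_eq_zero.mp hz with h' | h'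
      · exact absurd h' h
      · exact h'
  have hv' : v 0 ≠ 0 ∨ v 1 ≠ 0 := by
    by_contra hc
    push_neg at hc
    exact hv (by ext i; fin_cases i <;> simp [hc.1, hc.2])
  rcases hv' with h | h
  · refine ⟨w 0 / v 0, ?_⟩
    ext i
    fin_cases i <;> simp only [Fin.mk_zero, Fin.mk_one, PiLp.smul_apply, smul_eq_mul]
    · exact (div_mul_cancel₀ _ h).symm
    · rw [div_mul_eq_mul_div, eq_div_iff h]
      linear_combination hdet
  · refine ⟨w 1 / v 1, ?_⟩
    ext i
    fin_cases i <;> simp only [Fin.mk_zero, Fin.mk_one, PiLp.smul_apply, smul_eq_mul]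
    · rw [div_mul_eq_mul_div, eq_div_iff h]
      linear_combination -hdet
    · exact (div_mul_cancel₀ _ h).symm

set_option maxHeartbeats 1000000 in
theorem disjoint_segments_infDist_attained_at_endpoint
    (A B C D : EuclideanSpace ℝ (Fin 2))
    (hdisj : Disjoint (segment ℝ A B) (segment ℝ C D)) :
    sInf {d : ℝ | ∃ p ∈ segment ℝ A B, ∃ q ∈ segment ℝ C D, dist p q = d} =
      min (min (infDist A (segment ℝ C D)) (infDist B (segment ℝ C D)))
          (min (infDist C (segment ℝ A B)) (infDist D (segment ℝ A B))) := by
  set S₁ := segment ℝ A B with hS₁def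
  set S₂ := segment ℝ C D with hS₂def
  have hc1 : IsCompact S₁ := seg_compact A B
  have hc2 : IsCompact S₂ := seg_compact C D
  have hne1 : S₁.Nonempty := ⟨A, left_mem_segment ℝ A B⟩
  have hne2 : S₂.Nonempty := ⟨C, left_mem_segment ℝ C D⟩
  set Dset := {d : ℝ | ∃ p ∈ S₁, ∃ q ∈ S₂, dist p q = d} with hDset
  -- minimum attained
  have hmin0 : ∃ z ∈ S₁ ×ˢ S₂, IsMinOn (fun pq : _ × _ => dist pq.1 pq.2) (S₁ ×ˢ S₂) z :=
    (hc1.prod hc2).exists_isMinOn (hne1.prod hne2)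
      ((continuous_fst.dist continuous_snd).continuousOn)
  obtain ⟨⟨p₀, q₀⟩, hpq, hmin⟩ := hmin0
  obtain ⟨hp₀, hq₀⟩ := hpq
  have hmin' : ∀ p ∈ S₁, ∀ q ∈ S₂, dist p₀ q₀ ≤ dist p q := by
    intro p hp q hq
    exact isMinOn_iff.mp hmin (p, q) (Set.mk_mem_prod hp hq)
  have hbdd : BddBelow Dset := by
    refine ⟨0, fun d hd => ?_⟩
    obtain ⟨p, _, q, _, hd⟩ := hd
    exact hd ▸ dist_nonneg
  have hDne : Dset.Nonempty := ⟨dist p₀ q₀, p₀, hp₀, q₀, hq₀, rfl⟩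
  -- key claim: the min value dominates some endpoint distance
  have hkey : min (min (infDist A S₂) (infDist B S₂)) (min (infDist C S₁) (infDist D S₁)) ≤
      dist p₀ q₀ := by
    -- find endpoint witness
    have hwit : ∃ p ∈ S₁, ∃ q ∈ S₂, dist p q = dist p₀ q₀ ∧
        (p = A ∨ p = B ∨ q = C ∨ q = D) := by
      obtain ⟨s, hs, hps⟩ : ∃ s ∈ Set.Icc (0:ℝ) 1, p₀ = A + s • (B - A) := by
        rw [hS₁def, segment_eq_image' ℝ A B] at hp₀
        obtain ⟨s, hs, h⟩ := hp₀
        exact ⟨s, hs, h.symm⟩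
      obtain ⟨u, hu, hqu⟩ : ∃ u ∈ Set.Icc (0:ℝ) 1, q₀ = C + u • (D - C) := by
        rw [hS₂def, segment_eq_image' ℝ C D] at hq₀
        obtain ⟨u, hu, h⟩ := hq₀
        exact ⟨u, hu, h.symm⟩
      by_cases hA : p₀ = A
      · exact ⟨p₀, hp₀, q₀, hq₀, rfl, Or.inl hA⟩
      by_cases hB : p₀ = B
      · exact ⟨p₀, hp₀, q₀, hq₀, rfl, Or.inr (Or.inl hB)⟩
      by_cases hC : q₀ = C
      · exact ⟨p₀, hp₀, q₀, hq₀, rfl, Or.inr (Or.inr (Or.inl hC))⟩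
      by_cases hD : q₀ = D
      · exact ⟨p₀, hp₀, q₀, hq₀, rfl, Or.inr (Or.inr (Or.inr hD))⟩
      set v := B - A with hv
      set w := D - C with hw
      have hvne : v ≠ 0 := by
        intro h
        exact hA (by rw [hps, h, smul_zero, add_zero])
      have hwne : w ≠ 0 := by
        intro h
        exact hC (by rw [hqu, h, smul_zero, add_zero])
      have hs0 : 0 < s := by
        rcases lt_or_eq_of_le hs.1 with h | h
        · exact h
        · exact absurd (by rw [hps, ← h, zero_smul, add_zero]) hA
      have hs1 : s < 1 := by
        rcases lt_or_eq_of_le hs.2 with h | h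
        · exact h
        · refine absurd ?_ hB
          rw [hps, h, one_smul, hv]
          abel
      have hu0 : 0 < u := by
        rcases lt_or_eq_of_le hu.1 with h | h
        · exact h
        · exact absurd (by rw [hqu, ← h, zero_smul, add_zero]) hC
      have hu1 : u < 1 := by
        rcases lt_or_eq_of_le hu.2 with h | h
        · exact h
        · refine absurd ?_ hD
          rw [hqu, h, one_smul, hw]
          abel
      -- first-order conditions
      have hp_pt : ∀ t : ℝ, p₀ + t • v = A + (s + t) • v := by
        intro t; rw [hps, add_smul]; abel
      have hq_pt : ∀ t : ℝ, q₀ + t • w = C + (u + t) • w := by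
        intro t; rw [hqu, add_smul]; abel
      have hfoc1 : ⟪p₀ - q₀, v⟫ = 0 := by
        refine foc p₀ q₀ v (min s (1 - s)) (lt_min hs0 (by linarith)) ?_
        intro t ht
        rw [abs_le] at ht
        have h1 : 0 ≤ s + t := by
          have := ht.1
          have := min_le_left s (1 - s)
          linarith
        have h2 : s + t ≤ 1 := by
          have := ht.2
          have := min_le_right s (1 - s)
          linarith
        refine hmin' _ ?_ q₀ hq₀
        rw [hp_pt t]
        exact mem_seg A B (s + t) h1 h2
      have hfoc2 : ⟪p₀ - q₀, w⟫ = 0 := by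
        have h0 : ⟪q₀ - p₀, w⟫ = 0 := by
          refine foc q₀ p₀ w (min u (1 - u)) (lt_min hu0 (by linarith)) ?_
          intro t ht
          rw [abs_le] at ht
          have h1 : 0 ≤ u + t := by
            have := ht.1
            have := min_le_left u (1 - u)
            linarith
          have h2 : u + t ≤ 1 := by
            have := ht.2
            have := min_le_right u (1 - u)
            linarith
          rw [dist_comm q₀ p₀, dist_comm _ p₀]
          refine hmin' p₀ hp₀ _ ?_
          rw [hq_pt t]
          exact mem_seg C D (u + t) h1 h2
        have h0' : ⟪-(q₀ - p₀), w⟫ = 0 := by rw [inner_neg_left, h0, neg_zero]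
        rwa [neg_sub] at h0'
      -- linear dependence
      have hnne : p₀ - q₀ ≠ 0 := by
        rw [sub_ne_zero]
        intro h
        exact Set.disjoint_left.mp hdisj hp₀ (h ▸ hq₀)
      obtain ⟨r, hr⟩ := dep (p₀ - q₀) v w hnne hvne hfoc1 hfoc2
      have hrne : r ≠ 0 := by
        intro h
        rw [h, zero_smul] at hr
        exact hwne hr
      -- sliding along the common direction
      have hslide : ∀ t : ℝ, dist (p₀ + t • v) (q₀ + t • v) = dist p₀ q₀ := by
        intro t
        rw [dist_add_right]
      have hqv : ∀ t : ℝ, q₀ + t • v = C + (u + t / r) • w := by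
        intro t
        rw [← hq_pt (t / r), hr, smul_smul, div_mul_cancel₀ t hrne]
      have hpB : p₀ + (1 - s) • v = B := by
        rw [hp_pt]
        have h1 : s + (1 - s) = (1:ℝ) := by ring
        rw [h1, one_smul, hv]
        abel
      rcases hrne.lt_or_gt with hrneg | hrpos
      · -- r < 0
        rcases le_total (1 - s) (-(r * u)) with hcase | hcase
        · -- p reaches B first
          refine ⟨p₀ + (1 - s) • v, ?_, q₀ + (1 - s) • v, ?_, hslide _, Or.inr (Or.inl hpB)⟩
          · rw [hpB]; exact right_mem_segment ℝ A B
          · rw [hqv]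
            refine mem_seg C D _ ?_ ?_
            · have : -u ≤ (1 - s) / r := by
                rw [le_div_iff_of_neg hrneg]
                linarith
              linarith
            · have : (1 - s) / r ≤ 0 := div_nonpos_of_nonneg_of_nonpos (by linarith) hrneg.le
              linarith
        · -- q reaches C first
          refine ⟨p₀ + (-(r * u)) • v, ?_, q₀ + (-(r * u)) • v, ?_, hslide _,
            Or.inr (Or.inr (Or.inl ?_))⟩
          · rw [hp_pt]
            refine mem_seg A B _ ?_ ?_
            · nlinarith
            · linarith
          · rw [hqv]
            refine mem_seg C D _ ?_ ?_
            · have : -(r * u) / r = -u := by field_simp <;> ring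
              rw [this]; linarith
            · have : -(r * u) / r = -u := by field_simp <;> ring
              rw [this]; linarith
          · rw [hqv]
            have h1 : -(r * u) / r = -u := by field_simp <;> ring
            rw [h1]
            have h2 : u + -u = (0:ℝ) := by ring
            rw [h2, zero_smul, add_zero]
      · -- r > 0
        rcases le_total (1 - s) (r * (1 - u)) with hcase | hcase
        · -- p reaches B first
          refine ⟨p₀ + (1 - s) • v, ?_, q₀ + (1 - s) • v, ?_, hslide _, Or.inr (Or.inl hpB)⟩
          · rw [hpB]; exact right_mem_segment ℝ A B
          · rw [hqv]
            refine mem_seg C D _ ?_ ?_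
            · have : 0 ≤ (1 - s) / r := div_nonneg (by linarith) hrpos.le
              linarith
            · have : (1 - s) / r ≤ 1 - u := by
                rw [div_le_iff₀ hrpos]
                linarith [mul_comm r (1 - u)]
              linarith
        · -- q reaches D first
          refine ⟨p₀ + (r * (1 - u)) • v, ?_, q₀ + (r * (1 - u)) • v, ?_, hslide _,
            Or.inr (Or.inr (Or.inr ?_))⟩
          · rw [hp_pt]
            refine mem_seg A B _ ?_ ?_
            · nlinarith
            · linarith
          · rw [hqv]
            refine mem_seg C D _ ?_ ?_
            · have : r * (1 - u) / r = 1 - u := by field_simp <;> ring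
              rw [this]; linarith
            · have : r * (1 - u) / r = 1 - u := by field_simp <;> ring
              rw [this]; linarith
          · rw [hqv]
            have h1 : r * (1 - u) / r = 1 - u := by field_simp <;> ring
            rw [h1]
            have h2 : u + (1 - u) = (1:ℝ) := by ring
            rw [h2, one_smul, hw]
            abel
    obtain ⟨p, hp, q, hq, hdist, hcase⟩ := hwit
    rcases hcase with h | h | h | h
    · calc min (min (infDist A S₂) (infDist B S₂)) (min (infDist C S₁) (infDist D S₁)) ≤
          infDist A S₂ := le_trans (min_le_left _ _) (min_le_left _ _)
        _ ≤ dist A q := infDist_le_dist_of_mem hq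
        _ = dist p₀ q₀ := by rw [← h, hdist]
    · calc min (min (infDist A S₂) (infDist B S₂)) (min (infDist C S₁) (infDist D S₁)) ≤
          infDist B S₂ := le_trans (min_le_left _ _) (min_le_right _ _)
        _ ≤ dist B q := infDist_le_dist_of_mem hq
        _ = dist p₀ q₀ := by rw [← h, hdist]
    · calc min (min (infDist A S₂) (infDist B S₂)) (min (infDist C S₁) (infDist D S₁)) ≤
          infDist C S₁ := le_trans (min_le_right _ _) (min_le_left _ _)
        _ ≤ dist C p := infDist_le_dist_of_mem hp
        _ = dist p₀ q₀ := by rw [← h, dist_comm, hdist]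
    · calc min (min (infDist A S₂) (infDist B S₂)) (min (infDist C S₁) (infDist D S₁)) ≤
          infDist D S₁ := le_trans (min_le_right _ _) (min_le_right _ _)
        _ ≤ dist D p := infDist_le_dist_of_mem hp
        _ = dist p₀ q₀ := by rw [← h, dist_comm, hdist]
  apply le_antisymm
  · refine le_min (le_min ?_ ?_) (le_min ?_ ?_)
    · obtain ⟨q₁, hq₁, hq₁d⟩ := hc2.exists_infDist_eq_dist hne2 A
      exact hq₁d ▸ csInf_le hbdd ⟨A, left_mem_segment ℝ A B, q₁, hq₁, rfl⟩
    · obtain ⟨q₁, hq₁, hq₁d⟩ := hc2.exists_infDist_eq_dist hne2 B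
      exact hq₁d ▸ csInf_le hbdd ⟨B, right_mem_segment ℝ A B, q₁, hq₁, rfl⟩
    · obtain ⟨q₁, hq₁, hq₁d⟩ := hc1.exists_infDist_eq_dist hne1 C
      exact hq₁d ▸ csInf_le hbdd ⟨q₁, hq₁, C, left_mem_segment ℝ C D, dist_comm q₁ C⟩
    · obtain ⟨q₁, hq₁, hq₁d⟩ := hc1.exists_infDist_eq_dist hne1 D
      exact hq₁d ▸ csInf_le hbdd ⟨q₁, hq₁, D, right_mem_segment ℝ C D, dist_comm q₁ D⟩
  · refine le_csInf hDne ?_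
    intro d hd
    obtain ⟨p, hp, q, hq, hd⟩ := hd
    exact le_trans hkey (hd ▸ hmin' p hp q hq)
end
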